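/- (Gradient-descent trajectories are permutation-equivariant at every step.) In the setting where both L_y and L_{y∘σ} are differentiable on E = EuclideanSpace ℝ (Fin p) × (Fin N → EuclideanSpace ℝ (Fin d)), let (θ_k, H_k) be the gradient-descent iterates for L_y starting from (θ₀, H₀) with learning rate η, and let (θ'_k, H'_k) be the gradient-descent iterates for L_{y∘σ} starting from (θ₀, H₀∘σ) with the same learning rate. Then for every k ∈ ℕ: θ'_k = θ_k, H'_k = H_k∘σ, and L_{y∘σ}(θ'_k, H'_k) = L_y(θ_k, H_k). -/

import Mathlib

/-!
Relabelling the samples by `σ` is the linear isometry `P : (θ, H) ↦ (θ, H ∘ σ)` of `E`, and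
`L_{y∘σ} ∘ P = L_y`. Gradients of a function precomposed with a linear isometry are transported
by that isometry, so `P` intertwines one gradient-descent step for `L_y` with one for `L_{y∘σ}`;
by induction it maps the whole trajectory for `L_y` onto the one for `L_{y∘σ}`.
-/

noncomputable section

/-- The product Hilbert space `E` of network parameters and hash tables. -/
abbrev DinerParamSpace (p N d : ℕ) :=
  WithLp 2 ((EuclideanSpace ℝ (Fin p)) × (PiLp 2 fun _ : Fin N => EuclideanSpace ℝ (Fin d)))

/-- The DINER loss as a function on the product Hilbert space. -/
def dinerLossE {N p d m : ℕ}
    (f : EuclideanSpace ℝ (Fin p) → EuclideanSpace ℝ (Fin d) → (Fin m → ℝ))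
    (ℓ : (Fin m → ℝ) → (Fin m → ℝ) → ℝ)
    (y : Fin N → (Fin m → ℝ)) (x : DinerParamSpace p N d) : ℝ :=
  ∑ i : Fin N, ℓ (f x.fst (x.snd i)) (y i)

/-- Gradient-descent iterates with learning rate `η`, started at `x₀`. -/
def dinerGDIter {N p d m : ℕ}
    (f : EuclideanSpace ℝ (Fin p) → EuclideanSpace ℝ (Fin d) → (Fin m → ℝ))
    (ℓ : (Fin m → ℝ) → (Fin m → ℝ) → ℝ)
    (y : Fin N → (Fin m → ℝ)) (η : ℝ)
    (x₀ : DinerParamSpace p N d) : ℕ → DinerParamSpace p N d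
  | 0 => x₀
  | k + 1 => dinerGDIter f ℓ y η x₀ k - η • gradient (dinerLossE f ℓ y) (dinerGDIter f ℓ y η x₀ k)

open InnerProductSpace

section Gradient

variable {𝕜 F G : Type*} [RCLike 𝕜]
  [NormedAddCommGroup F] [InnerProductSpace 𝕜 F] [CompleteSpace F]
  [NormedAddCommGroup G] [InnerProductSpace 𝕜 G] [CompleteSpace G]

theorem gradient_comp_linearIsometryEquiv (T : F ≃ₗᵢ[𝕜] G) (g : G → 𝕜) (x : F) :
    gradient (g ∘ T) x = T.symm (gradient g (T x)) := by
  have hfderiv : fderiv 𝕜 (g ∘ T) x = (fderiv 𝕜 g (T x)).comp (T : F →L[𝕜] G) :=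
    (T : F ≃L[𝕜] G).comp_right_fderiv
  refine ext_inner_right 𝕜 fun v => ?_
  rw [gradient, hfderiv, toDual_symm_apply, ← T.inner_map_map, T.apply_symm_apply, gradient,
    toDual_symm_apply]
  rfl

end Gradient

section Diner

variable {N p d m : ℕ}

-- `piLpCongrLeft e` reindexes by `e.symm`, so this is `(θ, H) ↦ (θ, H ∘ σ)`.
def dinerPermIso (σ : Equiv.Perm (Fin N)) : DinerParamSpace p N d ≃ₗᵢ[ℝ] DinerParamSpace p N d :=
  LinearIsometryEquiv.withLpProdCongr 2 (LinearIsometryEquiv.refl ℝ _)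
    (LinearIsometryEquiv.piLpCongrLeft 2 ℝ _ σ.symm)

variable (f : EuclideanSpace ℝ (Fin p) → EuclideanSpace ℝ (Fin d) → (Fin m → ℝ))
  (ℓ : (Fin m → ℝ) → (Fin m → ℝ) → ℝ) (y : Fin N → (Fin m → ℝ)) (σ : Equiv.Perm (Fin N))

theorem dinerLossE_comp_perm (x : DinerParamSpace p N d) :
    dinerLossE f ℓ (y ∘ σ) (dinerPermIso σ x) = dinerLossE f ℓ y x :=
  Equiv.sum_comp σ fun i => ℓ (f x.fst (x.snd i)) (y i)

theorem gradient_dinerLossE_comp_perm (x : DinerParamSpace p N d) :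
    gradient (dinerLossE f ℓ (y ∘ σ)) (dinerPermIso σ x) =
      dinerPermIso σ (gradient (dinerLossE f ℓ y) x) := by
  have hloss : dinerLossE f ℓ (y ∘ σ) = dinerLossE f ℓ y ∘ (dinerPermIso σ).symm := by
    funext z
    simpa using dinerLossE_comp_perm f ℓ y σ ((dinerPermIso σ).symm z)
  rw [hloss, gradient_comp_linearIsometryEquiv, LinearIsometryEquiv.symm_symm,
    LinearIsometryEquiv.symm_apply_apply]

theorem dinerGDIter_comp_perm_eq (η : ℝ) (x₀ : DinerParamSpace p N d) (k : ℕ) :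
    dinerGDIter f ℓ (y ∘ σ) η (dinerPermIso σ x₀) k =
      dinerPermIso σ (dinerGDIter f ℓ y η x₀ k) := by
  induction k with
  | zero => rfl
  | succ k ih =>
    rw [dinerGDIter, dinerGDIter, ih, gradient_dinerLossE_comp_perm, ← map_smul, ← map_sub]

end Diner

theorem dinerGDIter_comp_perm_general {N p d m : ℕ}
    (f : EuclideanSpace ℝ (Fin p) → EuclideanSpace ℝ (Fin d) → (Fin m → ℝ))
    (ℓ : (Fin m → ℝ) → (Fin m → ℝ) → ℝ)
    (y : Fin N → (Fin m → ℝ)) (σ : Equiv.Perm (Fin N))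
    (η : ℝ)
    (θ₀ : EuclideanSpace ℝ (Fin p))
    (H₀ : PiLp 2 fun _ : Fin N => EuclideanSpace ℝ (Fin d)) :
    ∀ k : ℕ,
      (dinerGDIter f ℓ (y ∘ σ) η (WithLp.toLp 2 (θ₀, WithLp.toLp 2 fun i => H₀ (σ i)) : DinerParamSpace p N d) k).fst =
          (dinerGDIter f ℓ y η (WithLp.toLp 2 (θ₀, H₀) : DinerParamSpace p N d) k).fst ∧
      (dinerGDIter f ℓ (y ∘ σ) η (WithLp.toLp 2 (θ₀, WithLp.toLp 2 fun i => H₀ (σ i)) : DinerParamSpace p N d) k).snd =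
          (fun i => (dinerGDIter f ℓ y η (WithLp.toLp 2 (θ₀, H₀) : DinerParamSpace p N d) k).snd (σ i)) ∧
      dinerLossE f ℓ (y ∘ σ)
          (dinerGDIter f ℓ (y ∘ σ) η (WithLp.toLp 2 (θ₀, WithLp.toLp 2 fun i => H₀ (σ i)) : DinerParamSpace p N d) k) =
        dinerLossE f ℓ y (dinerGDIter f ℓ y η (WithLp.toLp 2 (θ₀, H₀) : DinerParamSpace p N d) k) := by
  intro k
  have hx₀ : (WithLp.toLp 2 (θ₀, WithLp.toLp 2 fun i => H₀ (σ i)) : DinerParamSpace p N d) =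
      dinerPermIso σ (WithLp.toLp 2 (θ₀, H₀)) := rfl
  rw [hx₀, dinerGDIter_comp_perm_eq, dinerLossE_comp_perm]
  exact ⟨rfl, rfl, rfl⟩

/-- Gradient-descent trajectories are permutation-equivariant at every step:
`θ'_k = θ_k`, `H'_k = H_k ∘ σ`, and `L_{y∘σ}(θ'_k, H'_k) = L_y(θ_k, H_k)`. -/
theorem dinerGDIter_comp_perm {N p d m : ℕ}
    (f : EuclideanSpace ℝ (Fin p) → EuclideanSpace ℝ (Fin d) → (Fin m → ℝ))
    (ℓ : (Fin m → ℝ) → (Fin m → ℝ) → ℝ)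
    (y : Fin N → (Fin m → ℝ)) (σ : Equiv.Perm (Fin N))
    (hdiff : ∀ i : Fin N,
      Differentiable ℝ (fun q : (EuclideanSpace ℝ (Fin p)) × (EuclideanSpace ℝ (Fin d)) =>
        ℓ (f q.1 q.2) (y i)))
    (hdiff' : ∀ i : Fin N,
      Differentiable ℝ (fun q : (EuclideanSpace ℝ (Fin p)) × (EuclideanSpace ℝ (Fin d)) =>
        ℓ (f q.1 q.2) ((y ∘ σ) i)))
    (η : ℝ)
    (θ₀ : EuclideanSpace ℝ (Fin p))
    (H₀ : PiLp 2 fun _ : Fin N => EuclideanSpace ℝ (Fin d)) :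
    ∀ k : ℕ,
      (dinerGDIter f ℓ (y ∘ σ) η (WithLp.toLp 2 (θ₀, WithLp.toLp 2 fun i => H₀ (σ i)) : DinerParamSpace p N d) k).fst =
          (dinerGDIter f ℓ y η (WithLp.toLp 2 (θ₀, H₀) : DinerParamSpace p N d) k).fst ∧
      (dinerGDIter f ℓ (y ∘ σ) η (WithLp.toLp 2 (θ₀, WithLp.toLp 2 fun i => H₀ (σ i)) : DinerParamSpace p N d) k).snd =
          (fun i => (dinerGDIter f ℓ y η (WithLp.toLp 2 (θ₀, H₀) : DinerParamSpace p N d) k).snd (σ i)) ∧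
      dinerLossE f ℓ (y ∘ σ)
          (dinerGDIter f ℓ (y ∘ σ) η (WithLp.toLp 2 (θ₀, WithLp.toLp 2 fun i => H₀ (σ i)) : DinerParamSpace p N d) k) =
        dinerLossE f ℓ y (dinerGDIter f ℓ y η (WithLp.toLp 2 (θ₀, H₀) : DinerParamSpace p N d) k) :=
  dinerGDIter_comp_perm_general f ℓ y σ η θ₀ H₀
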